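/- arXiv:2405.10159 — 2 statements merged into one kernel-verified Lean document; each statement's English description precedes it below -/
import Mathlib

section
/- In the Artin-Schreier tower over F_p, for every i ≥ 0 one has c_i^(N_0 N_1 ⋯ N_i) = 1 and a_i^(N_0 N_1 ⋯ N_i) = 1. -/
/-!
Write `a i = (c 0 ⋯ c (i-1)) ^ (p - 1)` (the paper's `a_{i-1}`), so that `c i ^ p = c i + a i`.
By induction on `i`, `a i` lies in `𝔽_{p^{p^i}}` and has norm `1` and trace `(-1) ^ i` over `𝔽_p`.
Since the trace `T` of `a i` is a nonzero element of `𝔽_p`, the power `p ^ (k * p ^ i)` of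
Frobenius sends `c i` to `c i + k T`, so `c i ∈ 𝔽_{p^{p^{i+1}}}` and its conjugates are the
`c i ^ p ^ s + k T`. The identities `∏_{k ∈ 𝔽_p} (y + k T) = y ^ p - y` and
`∑_{k ∈ 𝔽_p} (y + k T) ^ (p - 1) = -1` then give `N(c i) = N(a i) = 1` and
`Tr(a (i+1)) = Tr(a i * c i ^ (p - 1)) = -Tr(a i)`. Finally `N_0 ⋯ N_i = ∑_{r < p^{i+1}} p ^ r`,
so raising to the power `N_0 ⋯ N_i` is the norm from `𝔽_{p^{p^{i+1}}}` to `𝔽_p`.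
-/

open Finset Polynomial Function

@[to_additive sum_range_mul_eq_sum_sum]
theorem Finset.prod_range_mul_eq_prod_prod {M : Type*} [CommMonoid M] (f : ℕ → M) (m n : ℕ) :
    ∏ r ∈ range (m * n), f r = ∏ k ∈ range m, ∏ s ∈ range n, f (k * n + s) := by
  induction m with
  | zero => simp
  | succ m ih => rw [Nat.succ_mul, prod_range_add, ih, prod_range_succ]

@[to_additive sum_range_mul]
theorem Function.Periodic.prod_range_mul {M : Type*} [CommMonoid M] {f : ℕ → M} {n : ℕ}
    (hf : Periodic f n) (k : ℕ) : ∏ r ∈ range (k * n), f r = (∏ r ∈ range n, f r) ^ k := by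
  calc ∏ r ∈ range (k * n), f r = ∏ _j ∈ range k, ∏ s ∈ range n, f s := by
        rw [prod_range_mul_eq_prod_prod]
        refine prod_congr rfl fun j _ => prod_congr rfl fun s _ => ?_
        rw [add_comm, ← Nat.cast_id j, hf.nat_mul j s]
    _ = (∏ r ∈ range n, f r) ^ k := by rw [prod_const, card_range]

theorem pow_pow_eq_self_of_pow_eq_self {M : Type*} [Monoid M] {y : M} {q : ℕ} (h : y ^ q = y)
    (s : ℕ) : y ^ q ^ s = y := by
  induction s with
  | zero => rw [pow_zero, pow_one]
  | succ s ih => rw [pow_succ, pow_mul, ih, h]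

theorem periodic_pow_pow {M : Type*} [Monoid M] {x : M} {q n : ℕ} (hx : x ^ q ^ n = x) :
    Periodic (fun r => x ^ q ^ r) n := fun r => by
  simp only [add_comm r, pow_add, pow_mul, hx]

theorem pow_pow_mul_add_of_pow_pow_eq_self {M : Type*} [Monoid M] {x : M} {q n : ℕ}
    (hx : x ^ q ^ n = x) (k s : ℕ) : x ^ q ^ (k * n + s) = x ^ q ^ s := by
  simpa [add_comm] using (periodic_pow_pow hx).nat_mul k s

@[to_additive]
theorem ZMod.prod_range_natCast {M : Type*} [CommMonoid M] {n : ℕ} [NeZero n] (g : ZMod n → M) :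
    ∏ k ∈ range n, g k = ∏ a, g a :=
  prod_nbij' (↑) ZMod.val (fun _ _ => mem_univ _) (fun a _ => mem_range.2 a.val_lt)
    (fun _ hk => ZMod.val_natCast_of_lt (mem_range.1 hk)) (fun a _ => ZMod.natCast_zmod_val a)
    fun _ _ => rfl

section ZModP

variable {p : ℕ} [Fact p.Prime]

theorem ZMod.X_pow_sub_X_eq_prod : (X ^ p - X : (ZMod p)[X]) = ∏ a : ZMod p, (X - C a) := by
  have hp : 1 < p := (Fact.out : p.Prime).one_lt
  have hroots : (X ^ p - X : (ZMod p)[X]).roots = univ.val := by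
    simpa [ZMod.card] using FiniteField.roots_X_pow_card_sub_X (ZMod p)
  have hmonic : (X ^ p - X : (ZMod p)[X]).Monic :=
    monic_X_pow_sub (by rw [degree_X]; exact_mod_cast hp)
  have hcard : (X ^ p - X : (ZMod p)[X]).roots.card = (X ^ p - X : (ZMod p)[X]).natDegree := by
    rw [hroots, FiniteField.X_pow_card_sub_X_natDegree_eq _ hp, ← card_def, card_univ, ZMod.card]
  rw [← prod_multiset_X_sub_C_of_monic_of_roots_card_eq hmonic hcard, hroots]
  rfl

theorem ZMod.sum_pow_sub_one : ∑ a : ZMod p, a ^ (p - 1) = -1 := by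
  have hp : 1 ≤ p := (Fact.out : p.Prime).one_lt.le
  rw [← add_sum_erase _ _ (mem_univ 0), zero_pow (by have := (Fact.out : p.Prime).two_le; omega),
    zero_add, sum_congr rfl fun a ha => ZMod.pow_card_sub_one_eq_one (ne_of_mem_erase ha),
    sum_const, card_erase_of_mem (mem_univ _), card_univ, ZMod.card, nsmul_one,
    Nat.cast_sub hp, ZMod.natCast_self, Nat.cast_one, zero_sub]

end ZModP

theorem prod_range_geom_sum_pow_pow {R : Type*} [CommSemiring R] (x : R) (q m : ℕ) :
    ∏ k ∈ range m, ∑ j ∈ range q, (x ^ q ^ k) ^ j = ∑ r ∈ range (q ^ m), x ^ r := by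
  induction m with
  | zero => simp
  | succ m ih =>
    rw [prod_range_succ, ih, pow_succ', sum_range_mul_eq_sum_sum, sum_mul_sum, sum_comm]
    refine sum_congr rfl fun j _ => sum_congr rfl fun r _ => ?_
    rw [← pow_mul, ← pow_add, add_comm, mul_comm]

-- For `x ∈ 𝔽_{p^n}` these are the norm and the trace of `x` over `𝔽_p`.
def frobNorm {M : Type*} [CommMonoid M] (p n : ℕ) (x : M) : M := ∏ r ∈ range n, x ^ p ^ r

def frobTrace {R : Type*} [Semiring R] (p n : ℕ) (x : R) : R := ∑ r ∈ range n, x ^ p ^ r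

section FrobNorm

variable {M : Type*} [CommMonoid M] {p n : ℕ}

theorem frobNorm_mul (x y : M) : frobNorm p n (x * y) = frobNorm p n x * frobNorm p n y := by
  simp only [frobNorm, mul_pow, prod_mul_distrib]

theorem frobNorm_pow (x : M) (m : ℕ) : frobNorm p n (x ^ m) = frobNorm p n x ^ m := by
  simp only [frobNorm, pow_right_comm x m, prod_pow]

theorem frobNorm_mul_left {x : M} (hx : x ^ p ^ n = x) (k : ℕ) :
    frobNorm p (k * n) x = frobNorm p n x ^ k :=
  (periodic_pow_pow hx).prod_range_mul k

theorem frobNorm_pow_eq_pow_prod (m : ℕ) (x : M) :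
    frobNorm p (p ^ m) x = x ^ ∏ k ∈ range m, ∑ j ∈ range p, (p ^ p ^ k) ^ j := by
  rw [prod_range_geom_sum_pow_pow, frobNorm, prod_pow_eq_pow_sum]

end FrobNorm

theorem frobTrace_mul_left {R : Type*} [Semiring R] {p n : ℕ} {x : R} (hx : x ^ p ^ n = x)
    (k : ℕ) : frobTrace p (k * n) x = k • frobTrace p n x :=
  (periodic_pow_pow hx).sum_range_mul k

section CharP

variable {K : Type*} [Field K] {p : ℕ} [Fact p.Prime] [CharP K p]

theorem prod_range_add_natCast (y : K) : ∏ k ∈ range p, (y + k) = y ^ p - y := by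
  let φ := ZMod.castHom (dvd_refl p) K
  calc ∏ k ∈ range p, (y + k) = ∏ a : ZMod p, (y + φ a) := by
        rw [← ZMod.prod_range_natCast]; simp only [map_natCast]
    _ = ∏ a : ZMod p, (y - φ a) :=
        Fintype.prod_equiv (Equiv.neg _) _ _ fun a => by simp [sub_eq_add_neg]
    _ = ((X ^ p - X : (ZMod p)[X]).map φ).eval y := by
        rw [ZMod.X_pow_sub_X_eq_prod, Polynomial.map_prod, eval_prod]; simp
    _ = y ^ p - y := by simp

theorem sum_range_add_natCast_pow_sub_one (y : K) : ∑ k ∈ range p, (y + k) ^ (p - 1) = -1 := by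
  let φ := ZMod.castHom (dvd_refl p) K
  have hvanish : ∀ j ∈ range (p - 1 + 1), j ≠ 0 →
      y ^ j * φ (∑ a : ZMod p, a ^ (p - 1 - j)) * ((p - 1).choose j) = 0 := fun j _ hj => by
    have hp := (Fact.out : p.Prime).two_le
    rw [FiniteField.sum_pow_lt_card_sub_one _ _ (by rw [ZMod.card]; omega), map_zero, mul_zero,
      zero_mul]
  calc ∑ k ∈ range p, (y + k) ^ (p - 1) = ∑ a : ZMod p, (y + φ a) ^ (p - 1) := by
        rw [← ZMod.sum_range_natCast]; simp only [map_natCast]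
    _ = ∑ j ∈ range (p - 1 + 1),
          y ^ j * φ (∑ a : ZMod p, a ^ (p - 1 - j)) * ((p - 1).choose j) := by
        simp only [add_pow, map_sum, map_pow, mul_sum, sum_mul]
        exact sum_comm
    _ = φ (∑ a : ZMod p, a ^ (p - 1)) := by
        rw [sum_eq_single_of_mem 0 (by simp) hvanish]; simp
    _ = -1 := by rw [ZMod.sum_pow_sub_one, map_neg, map_one]

theorem natCast_mul_add_eq_mul_div_add {T : K} (hT : T ≠ 0) (y : K) (k : ℕ) :
    y + k * T = T * (y / T + k) := by
  field_simp

theorem prod_range_add_natCast_mul {T : K} (hT : T ^ (p - 1) = 1) (y : K) :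
    ∏ k ∈ range p, (y + k * T) = y ^ p - y := by
  have hT0 : T ≠ 0 :=
    ne_zero_pow (Nat.sub_ne_zero_of_lt (Fact.out : p.Prime).one_lt) (hT ▸ one_ne_zero)
  have hTp : T ^ p = T := by
    rw [← Nat.sub_add_cancel (Fact.out : p.Prime).one_lt.le, pow_succ, hT, one_mul]
  rw [prod_congr rfl fun k _ => natCast_mul_add_eq_mul_div_add hT0 y k, prod_mul_distrib,
    prod_const, card_range, prod_range_add_natCast, div_pow, hTp]
  field_simp

theorem sum_range_add_natCast_mul_pow_sub_one {T : K} (hT : T ^ (p - 1) = 1) (y : K) :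
    ∑ k ∈ range p, (y + k * T) ^ (p - 1) = -1 := by
  have hT0 : T ≠ 0 :=
    ne_zero_pow (Nat.sub_ne_zero_of_lt (Fact.out : p.Prime).one_lt) (hT ▸ one_ne_zero)
  simp only [natCast_mul_add_eq_mul_div_add hT0, mul_pow, hT, one_mul,
    sum_range_add_natCast_pow_sub_one]

theorem pow_pow_eq_add_frobTrace {x a : K} (hx : x ^ p = x + a) (m : ℕ) :
    x ^ p ^ m = x + frobTrace p m a := by
  induction m with
  | zero => simp [frobTrace]
  | succ m ih =>
    rw [pow_succ, pow_mul, ih, add_pow_char, hx, frobTrace, frobTrace, sum_pow_char,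
      sum_range_succ', pow_zero, pow_one]
    simp only [← pow_mul, ← pow_succ]
    ring

section ArtinSchreierStep

variable {x a : K} {n : ℕ}

theorem frobTrace_pow_char (ha : a ^ p ^ n = a) : frobTrace p n a ^ p = frobTrace p n a := by
  have hshift := sum_range_succ' (fun r => a ^ p ^ r) n
  rw [sum_range_succ, ha, pow_zero, pow_one, add_right_cancel_iff] at hshift
  rw [frobTrace, sum_pow_char]
  simp only [← pow_mul, ← pow_succ]
  exact hshift.symm

theorem frobTrace_pow_sub_one (ha : a ^ p ^ n = a) (hT : frobTrace p n a ≠ 0) :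
    frobTrace p n a ^ (p - 1) = 1 := by
  refine mul_right_cancel₀ hT ?_
  rw [← pow_succ, Nat.sub_add_cancel (Fact.out : p.Prime).one_lt.le, one_mul,
    frobTrace_pow_char ha]

theorem pow_pow_mul_add_eq_add (hx : x ^ p = x + a) (ha : a ^ p ^ n = a) (k s : ℕ) :
    x ^ p ^ (k * n + s) = x ^ p ^ s + k * frobTrace p n a := by
  have hkT : ((k : K) * frobTrace p n a) ^ p = k * frobTrace p n a := by
    rw [mul_pow, frobTrace_pow_char ha, ← frobenius_def, map_natCast]
  rw [pow_add, pow_mul, pow_pow_eq_add_frobTrace hx, frobTrace_mul_left ha, nsmul_eq_mul,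
    add_pow_char_pow, pow_pow_eq_self_of_pow_eq_self hkT]

theorem pow_pow_char_mul_eq_self (hx : x ^ p = x + a) (ha : a ^ p ^ n = a) :
    x ^ p ^ (p * n) = x := by
  simpa using pow_pow_mul_add_eq_add hx ha p 0

theorem frobNorm_char_mul_eq (hx : x ^ p = x + a) (ha : a ^ p ^ n = a)
    (hT : frobTrace p n a ≠ 0) : frobNorm p (p * n) x = frobNorm p n a := by
  rw [frobNorm, prod_range_mul_eq_prod_prod, prod_comm]
  refine prod_congr rfl fun s _ => ?_
  simp only [pow_pow_mul_add_eq_add hx ha]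
  rw [prod_range_add_natCast_mul (frobTrace_pow_sub_one ha hT), eq_sub_of_add_eq' hx.symm,
    sub_pow_char_pow, pow_right_comm]

theorem frobTrace_char_mul_mul_pow_sub_one (hx : x ^ p = x + a) (ha : a ^ p ^ n = a)
    (hT : frobTrace p n a ≠ 0) : frobTrace p (p * n) (a * x ^ (p - 1)) = -frobTrace p n a := by
  rw [frobTrace, sum_range_mul_eq_sum_sum, sum_comm, frobTrace, ← sum_neg_distrib]
  refine sum_congr rfl fun s _ => ?_
  have hconj : ∀ k, (a * x ^ (p - 1)) ^ p ^ (k * n + s) =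
      a ^ p ^ s * (x ^ p ^ s + k * frobTrace p n a) ^ (p - 1) := fun k => by
    rw [mul_pow, pow_right_comm x, pow_pow_mul_add_eq_add hx ha,
      pow_pow_mul_add_of_pow_pow_eq_self ha]
  simp only [hconj, ← mul_sum, mul_neg_one,
    sum_range_add_natCast_mul_pow_sub_one (frobTrace_pow_sub_one ha hT)]

end ArtinSchreierStep

theorem tower_coeff_fixed_norm_trace (c : ℕ → K)
    (hc : ∀ i, c i ^ p - c i = (∏ j ∈ range i, c j) ^ (p - 1)) (i : ℕ) :
    ((∏ j ∈ range i, c j) ^ (p - 1)) ^ p ^ p ^ i = (∏ j ∈ range i, c j) ^ (p - 1) ∧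
    frobNorm p (p ^ i) ((∏ j ∈ range i, c j) ^ (p - 1)) = 1 ∧
    frobTrace p (p ^ i) ((∏ j ∈ range i, c j) ^ (p - 1)) = (-1) ^ i := by
  induction i with
  | zero => simp [frobNorm, frobTrace]
  | succ i ih =>
    obtain ⟨ha, hN, hT⟩ := ih
    have hx := eq_add_of_sub_eq' (hc i)
    have hT0 : frobTrace p (p ^ i) ((∏ j ∈ range i, c j) ^ (p - 1)) ≠ 0 := by simp [hT]
    rw [prod_range_succ, mul_pow, pow_succ' p i]
    refine ⟨?_, ?_, ?_⟩
    · rw [mul_pow, pow_right_comm (c i), pow_pow_char_mul_eq_self hx ha]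
      congr 1
      simpa using pow_pow_mul_add_of_pow_pow_eq_self ha p 0
    · rw [frobNorm_mul, frobNorm_pow (c i), frobNorm_char_mul_eq hx ha hT0, hN,
        frobNorm_mul_left ha, hN, one_pow, one_pow, one_mul]
    · rw [frobTrace_char_mul_mul_pow_sub_one hx ha hT0, hT, pow_succ, mul_neg_one]

end CharP

theorem c_pow_prod_N_eq_one (p : ℕ) [Fact p.Prime]
    (c : ℕ → AlgebraicClosure (ZMod p))
    (hc : ∀ i, c i ^ p - c i = (∏ j ∈ Finset.range i, c j) ^ (p - 1))
    (i : ℕ) :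
    c i ^ (∏ k ∈ Finset.range (i + 1), ∑ j ∈ Finset.range p, (p ^ p ^ k) ^ j) = 1 ∧
    ((∏ j ∈ Finset.range (i + 1), c j) ^ (p - 1)) ^
      (∏ k ∈ Finset.range (i + 1), ∑ j ∈ Finset.range p, (p ^ p ^ k) ^ j) = 1 := by
  obtain ⟨ha, hN, hT⟩ := tower_coeff_fixed_norm_trace c hc i
  have hNc : frobNorm p (p ^ (i + 1)) (c i) = 1 := by
    rw [pow_succ', frobNorm_char_mul_eq (eq_add_of_sub_eq' (hc i)) ha (by simp [hT]), hN]
  rw [← frobNorm_pow_eq_pow_prod, ← frobNorm_pow_eq_pow_prod]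
  exact ⟨hNc, (tower_coeff_fixed_norm_trace c hc (i + 1)).2.1⟩
end

section
/- In the Artin-Schreier tower over F_p, for i ≥ 0 let m be the order of c_i modulo the subgroup L_{i-1}ˣ (i.e., the least n ≥ 1 with c_i^n ∈ L_{i-1}). Then the multiplicative order of c_i satisfies O(c_i) = m · O(a_{i-1}). -/
/-!
Index the tower so that `L_i = 𝔽_p[c_j : j < i]` and `a_i = (c_0 ⋯ c_{i-1})^(p-1)`, and put
`q = p^(p^i)`. If `x^p = x + a` and `a^(p^s) = a`, then `x^(p^(s v)) = x + v T` with
`T = ∑_{j<s} a^(p^j)` in `𝔽_p`. By induction on `i`, `T = (-1)^i` for `a = a_i, s = p^i` (the trace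
of `a_{i+1} = a_i c_i^(p-1)` is computed in stages, using `∑_{t ∈ 𝔽_p} (x + t)^(p-1) = -1`), and
`L_i` is exactly the set of roots of `X^q - X`: it has at least `q` elements because the maps
`x ↦ x^(q^v)`, which fix `L_i`, move `c_i` to the `p` distinct points `c_i + v (-1)^i`; this makes
`1, c_i, …, c_i^(p-1)` independent over `L_i`.

Hence `c_i^(1 + q + ⋯ + q^(p-1)) = ∏_{t ∈ 𝔽_p} (c_i + t) = c_i^p - c_i = a_i`, and `c_i^n ∈ L_i` iff
`(c_i^(q-1))^n = 1`, so `m` is the order of `c_i^(q-1)`. As `c_i^((q-1)(1 + q + ⋯ + q^(p-1))) = 1`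
and `1 + q + ⋯ + q^(p-1) ≡ p` is prime to `q - 1`, the order of `c_i` is the product of the orders
of `c_i^(q-1)` and `a_i`.
-/

open Finset Polynomial

theorem Finset.sum_range_mul {M : Type*} [AddCommMonoid M] (f : ℕ → M) (s d : ℕ) :
    ∑ k ∈ range (s * d), f k = ∑ v ∈ range d, ∑ u ∈ range s, f (s * v + u) := by
  induction d with
  | zero => simp
  | succ d ih => rw [Nat.mul_succ, sum_range_add, ih, sum_range_succ]

theorem Nat.coprime_sub_one_sum_range_pow_of_dvd {q d : ℕ} (hq : 1 ≤ q) (hd : d ∣ q) :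
    (q - 1).Coprime (∑ v ∈ range d, q ^ v) := by
  have hmod : ∑ v ∈ range d, q ^ v ≡ d [MOD q - 1] := by
    have h1 : ∀ v ∈ range d, q ^ v ≡ 1 [MOD q - 1] := fun v _ => by
      simpa using (Nat.modEq_sub hq).pow v
    simpa using Nat.ModEq.sum h1
  rw [Nat.Coprime, Nat.gcd_comm, hmod.gcd_eq, Nat.gcd_comm]
  exact ((Nat.coprime_self_sub_left hq).2 (Nat.coprime_one_left q)).coprime_dvd_right hd

theorem orderOf_eq_orderOf_pow_mul_orderOf_pow {G : Type*} [Monoid G] {x : G} {a b : ℕ}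
    (hab : a.Coprime b) (h : x ^ (a * b) = 1) :
    orderOf x = orderOf (x ^ a) * orderOf (x ^ b) := by
  rcases Nat.eq_zero_or_pos a with rfl | ha
  · simp [(Nat.coprime_zero_left b).mp hab]
  rcases Nat.eq_zero_or_pos b with rfl | hb
  · simp [(Nat.coprime_zero_right a).mp hab]
  have hdvd : orderOf x ∣ a * b := orderOf_dvd_of_pow_eq_one h
  have hx : 0 < orderOf x := Nat.pos_of_dvd_of_pos hdvd (Nat.mul_pos ha hb)
  have hgcd : (orderOf x).gcd a * (orderOf x).gcd b = orderOf x := by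
    rw [← Nat.Coprime.gcd_mul _ hab, Nat.gcd_eq_left hdvd]
  rw [orderOf_pow' x ha.ne', orderOf_pow' x hb.ne',
    Nat.div_eq_of_eq_mul_left (Nat.gcd_pos_of_pos_left _ hx) (by rw [mul_comm, hgcd]),
    Nat.div_eq_of_eq_mul_left (Nat.gcd_pos_of_pos_left _ hx) hgcd.symm, mul_comm, hgcd]

theorem pow_sub_one_eq_one_iff {M₀ : Type*} [MonoidWithZero M₀] [IsRightCancelMulZero M₀]
    {x : M₀} (hx : x ≠ 0) {q : ℕ} (hq : 1 ≤ q) : x ^ (q - 1) = 1 ↔ x ^ q = x := by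
  rw [← mul_eq_right₀ hx, ← pow_succ, Nat.sub_add_cancel hq]

theorem pow_pow_eq_self {M : Type*} [Monoid M] {x : M} {q : ℕ} (h : x ^ q = x) (k : ℕ) :
    x ^ q ^ k = x := by
  induction k with
  | zero => simp
  | succ k ih => rw [pow_succ, pow_mul, ih, h]

theorem pow_pow_pow_eq_self_of_le {M : Type*} [Monoid M] {x : M} {p m n : ℕ}
    (h : x ^ p ^ p ^ m = x) (hmn : m ≤ n) : x ^ p ^ p ^ n = x := by
  obtain ⟨k, rfl⟩ := Nat.exists_eq_add_of_le hmn
  rw [pow_add, pow_mul]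
  exact pow_pow_eq_self h _

section RootsOfXPowSubX

variable {K : Type*} [Field K] {q : ℕ}

theorem setOf_pow_eq_self_eq_roots [DecidableEq K] (hq : 1 < q) :
    {x : K | x ^ q = x} = ((X ^ q - X : K[X]).roots.toFinset : Set K) := by
  ext x
  simp [mem_roots (FiniteField.X_pow_card_sub_X_ne_zero K hq), sub_eq_zero]

theorem finite_setOf_pow_eq_self (hq : 1 < q) : {x : K | x ^ q = x}.Finite := by
  classical
  rw [setOf_pow_eq_self_eq_roots hq]
  exact finite_toSet _

theorem ncard_setOf_pow_eq_self_le (hq : 1 < q) : {x : K | x ^ q = x}.ncard ≤ q := by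
  classical
  rw [setOf_pow_eq_self_eq_roots hq, Set.ncard_coe_finset]
  exact (Multiset.toFinset_card_le _).trans
    ((card_roots' _).trans (FiniteField.X_pow_card_sub_X_natDegree_eq K hq).le)

end RootsOfXPowSubX

namespace ZMod

variable {p : ℕ} [Fact p.Prime]

@[to_additive sum_range_natCast_mul]
theorem prod_range_natCast_mul {M : Type*} [CommMonoid M] (f : ZMod p → M) {τ : ZMod p}
    (hτ : τ ≠ 0) : ∏ v ∈ range p, f (v * τ) = ∏ t, f t := by
  rw [← Equiv.prod_comp (Equiv.mulRight₀ τ hτ) f]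
  exact prod_nbij Nat.cast (fun _ _ => mem_univ _)
    (by rw [coe_range]; exact CharP.natCast_injOn_Iio _ p)
    (fun t _ => ⟨t.val, by simpa using t.val_lt, natCast_zmod_val t⟩) fun _ _ => rfl

theorem sum_pow_sub_one_s15 : ∑ t : ZMod p, t ^ (p - 1) = -1 := by
  simp [pow_card_sub_one, sum_ite, filter_ne', Nat.cast_sub (Fact.out : p.Prime).one_le]

theorem prod_X_sub_C : ∏ t : ZMod p, (X - C t) = X ^ p - X := by
  have hp := (Fact.out : p.Prime).one_lt
  have hroots : (X ^ p - X : (ZMod p)[X]).roots = univ.val := by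
    simpa [card] using FiniteField.roots_X_pow_card_sub_X (ZMod p)
  have hmonic : (X ^ p - X : (ZMod p)[X]).Monic := monic_X_pow_sub (by simpa using hp)
  have := prod_multiset_X_sub_C_of_monic_of_roots_card_eq hmonic
    (by rw [hroots, FiniteField.X_pow_card_sub_X_natDegree_eq _ hp]; simp)
  rwa [hroots] at this

variable {R : Type*} [CommRing R] [Algebra (ZMod p) R]

theorem prod_add_algebraMap (x : R) :
    ∏ t : ZMod p, (x + algebraMap (ZMod p) R t) = x ^ p - x := by
  have := congrArg (aeval x) (prod_X_sub_C (p := p))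
  simp only [map_prod, map_sub, map_pow, aeval_X, aeval_C] at this
  rw [← this, ← Equiv.prod_comp (Equiv.neg (ZMod p))]
  simp [sub_eq_add_neg]

theorem sum_add_algebraMap_pow_sub_one (x : R) :
    ∑ t : ZMod p, (x + algebraMap (ZMod p) R t) ^ (p - 1) = -1 := by
  have hp := (Fact.out : p.Prime).pos
  simp_rw [add_pow, ← map_pow]
  rw [sum_comm, sum_eq_single 0]
  · simp only [pow_zero, one_mul, Nat.sub_zero, Nat.choose_zero_right, Nat.cast_one, mul_one]
    rw [← map_sum, sum_pow_sub_one_s15, map_neg, map_one]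
  · intro k hk hk0
    have hlt : p - 1 - k < Fintype.card (ZMod p) - 1 := by
      rw [card]; rw [mem_range] at hk; omega
    rw [← sum_mul, ← mul_sum, ← map_sum, FiniteField.sum_pow_lt_card_sub_one _ _ hlt,
      map_zero, mul_zero, zero_mul]
  · simp

end ZMod

section Frobenius

variable {p : ℕ} [Fact p.Prime] {R : Type*} [CommRing R] [CharP R p] {x a : R} {s : ℕ}

theorem sum_pow_char_pow_pow_char (ha : a ^ p ^ s = a) :
    (∑ j ∈ range s, a ^ p ^ j) ^ p = ∑ j ∈ range s, a ^ p ^ j := by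
  have h1 := sum_range_succ' (fun j => a ^ p ^ j) s
  have h2 := sum_range_succ (fun j => a ^ p ^ j) s
  simp only [pow_zero, pow_one, ha] at h1 h2
  rw [sum_pow_char]
  simp_rw [← pow_mul, ← pow_succ]
  linear_combination h2 - h1

theorem pow_char_pow_eq_add_sum (hx : x ^ p = x + a) (k : ℕ) :
    x ^ p ^ k = x + ∑ j ∈ range k, a ^ p ^ j := by
  induction k with
  | zero => simp
  | succ k ih =>
    rw [pow_succ, pow_mul, ih, add_pow_char, hx, sum_pow_char, sum_range_succ']
    simp_rw [← pow_mul, ← pow_succ]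
    ring

theorem pow_char_pow_pow_eq_add_mul (hx : x ^ p = x + a) (ha : a ^ p ^ s = a) (v : ℕ) :
    x ^ (p ^ s) ^ v = x + v * ∑ j ∈ range s, a ^ p ^ j := by
  induction v with
  | zero => simp
  | succ v ih =>
    have hT := pow_pow_eq_self (sum_pow_char_pow_pow_char ha) s
    rw [pow_succ, pow_mul, ih, ← iterateFrobenius_def, map_add, map_mul, map_natCast,
      iterateFrobenius_def, iterateFrobenius_def, hT, pow_char_pow_eq_add_sum hx]
    push_cast
    ring

theorem injOn_sum_mul_pow [IsDomain R] (hx : x ^ p = x + a) (ha : a ^ p ^ s = a)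
    (hT : ∑ j ∈ range s, a ^ p ^ j ≠ 0) :
    Set.InjOn (fun l : Fin p → R => ∑ k, l k * x ^ (k : ℕ))
      {l | ∀ k, l k ^ p ^ s = l k} := by
  intro l₁ hl₁ l₂ hl₂ h
  rw [← sub_eq_zero]
  -- The `(s v)`-th Frobenius fixes the coefficients and moves `x` to `x + v T`: Vandermonde.
  refine Matrix.eq_zero_of_forall_index_sum_mul_pow_eq_zero
    (f := fun v : Fin p => x + (v : ℕ) * ∑ j ∈ range s, a ^ p ^ j) (fun v w hvw => ?_)
    fun v => ?_
  · exact Fin.ext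
      (CharP.natCast_injOn_Iio R p v.2 w.2 (mul_right_cancel₀ hT (add_left_cancel hvw)))
  · have h₁ (k : Fin p) : l₁ k ^ (p ^ s) ^ (v : ℕ) = l₁ k := pow_pow_eq_self (hl₁ k) v
    have h₂ (k : Fin p) : l₂ k ^ (p ^ s) ^ (v : ℕ) = l₂ k := pow_pow_eq_self (hl₂ k) v
    have := congrArg (iterateFrobenius R p (s * v)) (sub_eq_zero.mpr h)
    simp only [map_zero, map_sub, map_sum, map_mul, map_pow, iterateFrobenius_def, pow_mul] at this
    simpa [pow_char_pow_pow_eq_add_mul hx ha, h₁, h₂, ← sum_sub_distrib, sub_mul] using this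

end Frobenius

namespace ArtinSchreierTower

variable {K : Type*} [Field K]

-- `a p c n` and `L p c n` are the paper's `a_{n-1}` and `L_{n-1}`.
def a (p : ℕ) (c : ℕ → K) (n : ℕ) : K := (∏ j ∈ range n, c j) ^ (p - 1)

def L (p : ℕ) [Algebra (ZMod p) K] (c : ℕ → K) (n : ℕ) : Subalgebra (ZMod p) K :=
  Algebra.adjoin (ZMod p) {x | ∃ j < n, x = c j}

variable {p : ℕ} {c : ℕ → K}

theorem a_succ (n : ℕ) : a p c (n + 1) = a p c n * c n ^ (p - 1) := by
  rw [a, a, prod_range_succ, mul_pow]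

theorem c_pow_char (hc : ∀ n, c n ^ p - c n = a p c n) (n : ℕ) : c n ^ p = c n + a p c n := by
  rw [← hc n, add_sub_cancel]

theorem a_pow_eq_self_of_forall_lt {n q : ℕ} (h : ∀ j < n, c j ^ q = c j) :
    a p c n ^ q = a p c n := by
  rw [a, ← pow_mul, mul_comm, pow_mul, ← prod_pow]
  congr 1
  exact prod_congr rfl fun j hj => h j (mem_range.mp hj)

theorem L_mono [Algebra (ZMod p) K] {m n : ℕ} (h : m ≤ n) : L p c m ≤ L p c n :=
  Algebra.adjoin_mono fun _ ⟨j, hj, hx⟩ => ⟨j, hj.trans_le h, hx⟩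

theorem c_mem_L [Algebra (ZMod p) K] {j n : ℕ} (h : j < n) : c j ∈ L p c n :=
  Algebra.subset_adjoin ⟨j, h, rfl⟩

variable [Fact p.Prime]

theorem one_lt_pow_pow (n : ℕ) : 1 < p ^ p ^ n :=
  Nat.one_lt_pow (pow_ne_zero _ (Fact.out : p.Prime).ne_zero) (Fact.out : p.Prime).one_lt

theorem c_ne_zero (hc : ∀ n, c n ^ p - c n = a p c n) (n : ℕ) : c n ≠ 0 := by
  induction n using Nat.strong_induction_on with
  | _ n ih =>
    intro h0
    have ha : a p c n ≠ 0 :=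
      pow_ne_zero _ (prod_ne_zero_iff.mpr fun j hj => ih j (mem_range.mp hj))
    have := hc n
    rw [h0, zero_pow (Fact.out : p.Prime).ne_zero, sub_zero] at this
    exact ha this.symm

theorem a_ne_zero (hc : ∀ n, c n ^ p - c n = a p c n) (n : ℕ) : a p c n ≠ 0 :=
  pow_ne_zero _ (prod_ne_zero_iff.mpr fun j _ => c_ne_zero hc j)

variable [CharP K p]

theorem c_pow_pow_eq_self (hc : ∀ n, c n ^ p - c n = a p c n) (n : ℕ) :
    c n ^ p ^ p ^ (n + 1) = c n := by
  induction n using Nat.strong_induction_on with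
  | _ n ih =>
    have ha : a p c n ^ p ^ p ^ n = a p c n :=
      a_pow_eq_self_of_forall_lt fun j hj => pow_pow_pow_eq_self_of_le (ih j hj) hj
    rw [pow_succ, pow_mul, pow_char_pow_pow_eq_add_mul (c_pow_char hc n) ha, CharP.cast_eq_zero,
      zero_mul, add_zero]

theorem c_pow_pow_eq_self_of_lt (hc : ∀ n, c n ^ p - c n = a p c n) {j n : ℕ} (h : j < n) :
    c j ^ p ^ p ^ n = c j :=
  pow_pow_pow_eq_self_of_le (c_pow_pow_eq_self hc j) h

theorem a_pow_pow_eq_self (hc : ∀ n, c n ^ p - c n = a p c n) (n : ℕ) :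
    a p c n ^ p ^ p ^ n = a p c n :=
  a_pow_eq_self_of_forall_lt fun _ hj => c_pow_pow_eq_self_of_lt hc hj

variable [Algebra (ZMod p) K]

theorem pow_pow_eq_self_of_mem_L (hc : ∀ n, c n ^ p - c n = a p c n) {n : ℕ} {x : K}
    (hx : x ∈ L p c n) : x ^ p ^ p ^ n = x := by
  induction hx using Algebra.adjoin_induction with
  | mem x hx => obtain ⟨j, hj, rfl⟩ := hx; exact c_pow_pow_eq_self_of_lt hc hj
  | algebraMap t => rw [← map_pow, pow_pow_eq_self (ZMod.pow_card t)]
  | add x y _ _ hx hy => rw [add_pow_char_pow, hx, hy]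
  | mul x y _ _ hx hy => rw [mul_pow, hx, hy]

theorem c_pow_pow_pow_eq_add (hc : ∀ n, c n ^ p - c n = a p c n) {n : ℕ}
    (htr : ∑ k ∈ range (p ^ n), a p c n ^ p ^ k = (-1) ^ n) (v : ℕ) :
    c n ^ (p ^ p ^ n) ^ v = c n + algebraMap (ZMod p) K (v * (-1) ^ n) := by
  rw [pow_char_pow_pow_eq_add_mul (c_pow_char hc n) (a_pow_pow_eq_self hc n), htr]
  simp

theorem sum_a_pow_pow_eq_neg_one_pow (hc : ∀ n, c n ^ p - c n = a p c n) (n : ℕ) :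
    ∑ k ∈ range (p ^ n), a p c n ^ p ^ k = (-1) ^ n := by
  induction n with
  | zero => simp [a]
  | succ n ih =>
    have hterm (v u : ℕ) : a p c (n + 1) ^ p ^ (p ^ n * v + u) =
        (a p c n * (c n + algebraMap (ZMod p) K (v * (-1) ^ n)) ^ (p - 1)) ^ p ^ u := by
      rw [pow_add, pow_mul, pow_mul p, a_succ, mul_pow, pow_pow_eq_self (a_pow_pow_eq_self hc n),
        ← pow_mul, mul_comm (p - 1), pow_mul, c_pow_pow_pow_eq_add hc ih]
    have hinner : ∑ v ∈ range p,
        a p c n * (c n + algebraMap (ZMod p) K (v * (-1) ^ n)) ^ (p - 1) = -a p c n := by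
      rw [← mul_sum,
        ZMod.sum_range_natCast_mul (fun t => (c n + algebraMap (ZMod p) K t) ^ (p - 1)) (by simp),
        ZMod.sum_add_algebraMap_pow_sub_one, mul_neg_one]
    calc ∑ k ∈ range (p ^ (n + 1)), a p c (n + 1) ^ p ^ k
        = ∑ u ∈ range (p ^ n), (∑ v ∈ range p,
            a p c n * (c n + algebraMap (ZMod p) K (v * (-1) ^ n)) ^ (p - 1)) ^ p ^ u := by
          -- `k = p^n v + u`: the inner sum over `v` is the trace from `L_{n+1}` down to `L_n`.
          rw [pow_succ, sum_range_mul, sum_comm]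
          refine sum_congr rfl fun u _ => ?_
          simp only [hterm, ← iterateFrobenius_def, map_sum]
      _ = (-1) ^ (n + 1) := by
          simp only [hinner, ← iterateFrobenius_def, map_neg, sum_neg_distrib]
          simp only [iterateFrobenius_def, ih, pow_succ]
          ring

theorem finite_L (hc : ∀ n, c n ^ p - c n = a p c n) (n : ℕ) : Finite (L p c n) :=
  ((finite_setOf_pow_eq_self (K := K) (one_lt_pow_pow n)).subset
    fun _ hx => pow_pow_eq_self_of_mem_L hc hx).to_subtype

theorem pow_pow_le_card_L (hc : ∀ n, c n ^ p - c n = a p c n) (n : ℕ) :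
    p ^ p ^ n ≤ Nat.card (L p c n) := by
  have := finite_L hc
  induction n with
  | zero =>
    simpa using Nat.card_le_card_of_injective (β := L p c 0)
      (fun t => ⟨algebraMap (ZMod p) K t, Subalgebra.algebraMap_mem _ t⟩)
      fun _ _ h => (algebraMap (ZMod p) K).injective (congrArg Subtype.val h)
  | succ n ih =>
    let g : (Fin p → L p c n) → L p c (n + 1) := fun l =>
      ⟨∑ k, l k * c n ^ (k : ℕ),
        sum_mem fun k _ =>
          mul_mem (L_mono n.le_succ (l k).2) (pow_mem (c_mem_L n.lt_succ_self) _)⟩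
    have hg : Function.Injective g := fun l₁ l₂ h => funext fun k => Subtype.ext <| congrFun
      (injOn_sum_mul_pow (c_pow_char hc n) (a_pow_pow_eq_self hc n)
        (by rw [sum_a_pow_pow_eq_neg_one_pow hc]; exact pow_ne_zero _ (neg_ne_zero.mpr one_ne_zero))
        (fun k => pow_pow_eq_self_of_mem_L hc (l₁ k).2)
        (fun k => pow_pow_eq_self_of_mem_L hc (l₂ k).2)
        (congrArg Subtype.val h)) k
    calc p ^ p ^ (n + 1) = (p ^ p ^ n) ^ p := by rw [pow_succ, pow_mul]
      _ ≤ Nat.card (L p c n) ^ p := Nat.pow_le_pow_left ih p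
      _ = Nat.card (Fin p → L p c n) := by rw [Nat.card_fun, Nat.card_fin]
      _ ≤ Nat.card (L p c (n + 1)) := Nat.card_le_card_of_injective g hg

theorem mem_L_iff (hc : ∀ n, c n ^ p - c n = a p c n) {n : ℕ} {x : K} :
    x ∈ L p c n ↔ x ^ p ^ p ^ n = x := by
  have hq := one_lt_pow_pow (p := p) n
  have hsub : (L p c n : Set K) ⊆ {x | x ^ p ^ p ^ n = x} := fun _ hx =>
    pow_pow_eq_self_of_mem_L hc hx
  have hcard : {x : K | x ^ p ^ p ^ n = x}.ncard ≤ (L p c n : Set K).ncard := by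
    calc _ ≤ p ^ p ^ n := ncard_setOf_pow_eq_self_le hq
      _ ≤ Nat.card (L p c n) := pow_pow_le_card_L hc n
      _ = (L p c n : Set K).ncard := Nat.card_coe_set_eq _
  exact Set.ext_iff.mp (Set.eq_of_subset_of_ncard_le hsub hcard (finite_setOf_pow_eq_self hq)) x

theorem c_pow_sum_pow_eq_a (hc : ∀ n, c n ^ p - c n = a p c n) (n : ℕ) :
    c n ^ ∑ v ∈ range p, (p ^ p ^ n) ^ v = a p c n := by
  rw [← prod_pow_eq_pow_sum]
  simp_rw [c_pow_pow_pow_eq_add hc (sum_a_pow_pow_eq_neg_one_pow hc n)]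
  rw [ZMod.prod_range_natCast_mul (fun t => c n + algebraMap (ZMod p) K t) (by simp),
    ZMod.prod_add_algebraMap, hc]

end ArtinSchreierTower

open ArtinSchreierTower in
theorem orderOf_c_eq_m_mul_orderOf_a_pred (p : ℕ) [Fact p.Prime]
    (c : ℕ → AlgebraicClosure (ZMod p))
    (hc : ∀ i, c i ^ p - c i = (∏ j ∈ Finset.range i, c j) ^ (p - 1))
    (i : ℕ) (m : ℕ) (hm : 0 < m)
    (hmem : c i ^ m ∈ Algebra.adjoin (ZMod p) {x | ∃ j < i, x = c j})
    (hmin : ∀ n : ℕ, 0 < n →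
      c i ^ n ∈ Algebra.adjoin (ZMod p) {x | ∃ j < i, x = c j} → m ≤ n) :
    orderOf (c i) = m * orderOf ((∏ j ∈ Finset.range i, c j) ^ (p - 1)) := by
  change ∀ n, c n ^ p - c n = a p c n at hc
  change orderOf (c i) = m * orderOf (a p c i)
  set q := p ^ p ^ i with hq_def
  have hq : 1 ≤ q := Nat.one_le_pow _ _ (Fact.out : p.Prime).pos
  have hmem_iff (n : ℕ) : c i ^ n ∈ L p c i ↔ (c i ^ (q - 1)) ^ n = 1 := by
    rw [mem_L_iff hc, ← hq_def, ← pow_sub_one_eq_one_iff (pow_ne_zero n (c_ne_zero hc i)) hq,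
      ← pow_mul, ← pow_mul, mul_comm]
  have hm_eq : m = orderOf (c i ^ (q - 1)) :=
    ((orderOf_eq_iff hm).2 ⟨(hmem_iff m).1 hmem,
      fun n hn hn0 h => (hmin n hn0 ((hmem_iff n).2 h)).not_gt hn⟩).symm
  have hcop : (q - 1).Coprime (∑ v ∈ range p, q ^ v) :=
    Nat.coprime_sub_one_sum_range_pow_of_dvd hq
      (dvd_pow_self p (pow_ne_zero i (Fact.out : p.Prime).ne_zero))
  have hone : c i ^ ((q - 1) * ∑ v ∈ range p, q ^ v) = 1 := by
    rw [mul_comm, pow_mul, c_pow_sum_pow_eq_a hc, pow_sub_one_eq_one_iff (a_ne_zero hc i) hq]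
    exact a_pow_pow_eq_self hc i
  rw [hm_eq, ← c_pow_sum_pow_eq_a hc i]
  exact orderOf_eq_orderOf_pow_mul_orderOf_pow hcop hone
end
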